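/- arXiv:2310.11893 — 3 statements merged into one kernel-verified Lean document; each statement's English description precedes it below -/
import Mathlib

section
/- Every solution (u1, u2, u3) in the nonnegative octant of the system u3 + 1 = u1 + u2, u1^2 + u2^2 + u3^2 = 1 with u2 <= u1 is of the form u1 = (1+u)/(1+u+u^2), u2 = u(1+u)/(1+u+u^2), u3 = u/(1+u+u^2) for some u in [0,1]. -/
/-!
Eliminating `u3 = u1 + u2 - 1` turns the sphere into the conic `u1² + u1 u2 + u2² = u1 + u2`.
Since `u1 > 0`, the ratio `u = u2 / u1` is defined, and substituting `u2 = u u1` into the conic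
gives `u1 (1 + u + u²) = 1 + u`; the hypotheses `0 ≤ u2 ≤ u1` say exactly that `u ∈ [0, 1]`.
-/

section Resonance

variable {K : Type*} [Field K] [LinearOrder K] [IsStrictOrderedRing K]

lemma one_add_self_add_sq_pos (u : K) : 0 < 1 + u + u ^ 2 := by
  nlinarith [sq_nonneg (2 * u + 1)]

lemma conic_of_resonant {x y z : K} (hlin : z + 1 = x + y) (hquad : x ^ 2 + y ^ 2 + z ^ 2 = 1) :
    x ^ 2 + x * y + y ^ 2 = x + y := by
  obtain rfl : z = x + y - 1 := by linear_combination hlin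
  linear_combination hquad / 2

lemma eq_param_of_resonant {x y z u : K} (hx : x ≠ 0) (hy : y = u * x)
    (hlin : z + 1 = x + y) (hquad : x ^ 2 + y ^ 2 + z ^ 2 = 1) :
    x = (1 + u) / (1 + u + u ^ 2) ∧ y = u * (1 + u) / (1 + u + u ^ 2) ∧
      z = u / (1 + u + u ^ 2) := by
  have hD := (one_add_self_add_sq_pos u).ne'
  have hconic := conic_of_resonant hlin hquad
  subst hy
  have hx' : x = (1 + u) / (1 + u + u ^ 2) := by
    rw [eq_div_iff hD]
    have hfactor : x * (x * (1 + u + u ^ 2) - (1 + u)) = 0 := by linear_combination hconic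
    linear_combination (mul_eq_zero.mp hfactor).resolve_left hx
  refine ⟨hx', by rw [hx']; ring, ?_⟩
  rw [show z = x + u * x - 1 by linear_combination hlin, hx']
  field_simp
  ring

end Resonance

theorem stmt_1_general (u1 u2 u3 : ℝ) (h2 : 0 ≤ u2) (h3 : 0 ≤ u3)
    (heq1 : u3 + 1 = u1 + u2) (heq2 : u1^2 + u2^2 + u3^2 = 1) (hle : u2 ≤ u1) :
    ∃ u ∈ Set.Icc (0:ℝ) 1,
      u1 = (1 + u) / (1 + u + u^2) ∧
      u2 = u * (1 + u) / (1 + u + u^2) ∧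
      u3 = u / (1 + u + u^2) := by
  have hu1 : 0 < u1 := by linarith
  refine ⟨u2 / u1, ⟨div_nonneg h2 hu1.le, div_le_one_of_le₀ hle hu1.le⟩, ?_⟩
  exact eq_param_of_resonant hu1.ne' (div_mul_cancel₀ u2 hu1.ne').symm heq1 heq2

theorem stmt_1 (u1 u2 u3 : ℝ) (h1 : 0 ≤ u1) (h2 : 0 ≤ u2) (h3 : 0 ≤ u3)
    (heq1 : u3 + 1 = u1 + u2) (heq2 : u1^2 + u2^2 + u3^2 = 1) (hle : u2 ≤ u1) :
    ∃ u ∈ Set.Icc (0:ℝ) 1,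
      u1 = (1 + u) / (1 + u + u^2) ∧
      u2 = u * (1 + u) / (1 + u + u^2) ∧
      u3 = u / (1 + u + u^2) :=
  stmt_1_general u1 u2 u3 h2 h3 heq1 heq2 hle
end

section
/- For beta in (-1,1) and u in (0,1], with v1 = (1+u)/(1+u+u^2), v2 = 1, v3 = u(1+u)/(1+u+u^2), v4 = u/(1+u+u^2), one has |v2^(2beta+3/2) - v1^(2beta+3/2)| <= C*u^2 and |v4^(2beta+3/2) - v3^(2beta+3/2)| <= C*u^(2beta+5/2) for a constant C depending only on beta. -/
/-! Away from `0` the map `x ↦ x ^ p` is Lipschitz, and `v₁, 1, v₄ / u` all lie in `[1/3, 1]` with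
`1 - v₁ = u² / (1 + u + u²)` and `v₁ - v₄ / u = u / (1 + u + u²)`. This gives the first bound directly,
and the second after pulling out the common factor `u ^ p` from `v₃ = u v₁` and `v₄ = u (v₄ / u)`. -/

open Real Set

theorem exists_lipschitzOnWith_rpow_Icc (p : ℝ) {a : ℝ} (ha : 0 < a) (b : ℝ) :
    ∃ K, LipschitzOnWith K (fun x : ℝ => x ^ p) (Icc a b) := by
  have hdiff : ContDiffOn ℝ 1 (fun x : ℝ => x ^ p) (Icc a b) := fun x hx =>
    (contDiffAt_rpow_const_of_ne (ha.trans_le hx.1).ne').contDiffWithinAt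
  exact (hdiff.locallyLipschitzOn (convex_Icc a b)).exists_lipschitzOnWith_of_compact isCompact_Icc

theorem LipschitzOnWith.exists_pos_abs_sub_le {K : NNReal} {f : ℝ → ℝ} {s : Set ℝ}
    (hf : LipschitzOnWith K f s) : ∃ C > 0, ∀ x ∈ s, ∀ y ∈ s, |f x - f y| ≤ C * |x - y| := by
  refine ⟨K + 1, by positivity, fun x hx y hy => ?_⟩
  have h := hf.dist_le_mul x hx y hy
  rw [Real.dist_eq, Real.dist_eq] at h
  exact h.trans (by gcongr; linarith)

theorem mul_rpow_sub_mul_rpow {u x y : ℝ} (hu : 0 ≤ u) (hx : 0 ≤ x) (hy : 0 ≤ y) (p : ℝ) :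
    (u * x) ^ p - (u * y) ^ p = u ^ p * (x ^ p - y ^ p) := by
  rw [mul_rpow hu hx, mul_rpow hu hy, mul_sub]

section ResonanceParameterization

variable {u : ℝ}

theorem one_le_one_add_add_sq (hu : 0 ≤ u) : 1 ≤ 1 + u + u ^ 2 := by nlinarith

theorem one_add_div_one_add_add_sq_mem_Icc (hu₀ : 0 ≤ u) (hu₁ : u ≤ 1) :
    (1 + u) / (1 + u + u ^ 2) ∈ Icc (1 / 3 : ℝ) 1 := by
  have hd : 0 < 1 + u + u ^ 2 := by positivity
  constructor
  · rw [div_le_div_iff₀ (by norm_num) hd]; nlinarith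
  · rw [div_le_one hd]; nlinarith

theorem inv_one_add_add_sq_mem_Icc (hu₀ : 0 ≤ u) (hu₁ : u ≤ 1) :
    (1 + u + u ^ 2)⁻¹ ∈ Icc (1 / 3 : ℝ) 1 := by
  have hd : 0 < 1 + u + u ^ 2 := by positivity
  constructor
  · rw [one_div, inv_le_inv₀ (by norm_num) hd]; nlinarith
  · exact inv_le_one_of_one_le₀ (one_le_one_add_add_sq hu₀)

theorem abs_one_sub_one_add_div_one_add_add_sq_le (hu : 0 ≤ u) :
    |1 - (1 + u) / (1 + u + u ^ 2)| ≤ u ^ 2 := by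
  have hd : 0 < 1 + u + u ^ 2 := by positivity
  have heq : 1 - (1 + u) / (1 + u + u ^ 2) = u ^ 2 / (1 + u + u ^ 2) := by
    field_simp; ring
  rw [heq, abs_of_nonneg (by positivity)]
  exact div_le_self (sq_nonneg u) (one_le_one_add_add_sq hu)

theorem abs_inv_sub_one_add_div_one_add_add_sq_le (hu : 0 ≤ u) :
    |(1 + u + u ^ 2)⁻¹ - (1 + u) / (1 + u + u ^ 2)| ≤ u := by
  have hd : 0 < 1 + u + u ^ 2 := by positivity
  have heq : (1 + u + u ^ 2)⁻¹ - (1 + u) / (1 + u + u ^ 2) = -(u / (1 + u + u ^ 2)) := by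
    field_simp; ring
  rw [heq, abs_neg, abs_of_nonneg (by positivity)]
  exact div_le_self hu (one_le_one_add_add_sq hu)

end ResonanceParameterization

theorem stmt_14_general (β : ℝ) :
    ∃ C : ℝ, 0 < C ∧ ∀ u ∈ Set.Ioc (0:ℝ) 1,
      let v1 := (1 + u) / (1 + u + u^2)
      let v2 := (1:ℝ)
      let v3 := u * (1 + u) / (1 + u + u^2)
      let v4 := u / (1 + u + u^2)
      |v2 ^ (2*β + 3/2) - v1 ^ (2*β + 3/2)| ≤ C * u^2 ∧
      |v4 ^ (2*β + 3/2) - v3 ^ (2*β + 3/2)| ≤ C * u ^ (2*β + 5/2) := by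
  set p : ℝ := 2 * β + 3 / 2
  obtain ⟨K, hK⟩ := exists_lipschitzOnWith_rpow_Icc p (by norm_num : (0 : ℝ) < 1 / 3) 1
  obtain ⟨C, hC, hlip⟩ := hK.exists_pos_abs_sub_le
  refine ⟨C, hC, fun u ⟨hu₀, hu₁⟩ => ?_⟩
  have hv₁ := one_add_div_one_add_add_sq_mem_Icc hu₀.le hu₁
  have hw := inv_one_add_add_sq_mem_Icc hu₀.le hu₁
  constructor
  · calc _ ≤ C * |1 - (1 + u) / (1 + u + u ^ 2)| := hlip 1 (by norm_num) _ hv₁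
      _ ≤ C * u ^ 2 := by gcongr; exact abs_one_sub_one_add_div_one_add_add_sq_le hu₀.le
  · have hv₃ : u * (1 + u) / (1 + u + u ^ 2) = u * ((1 + u) / (1 + u + u ^ 2)) := mul_div_assoc ..
    have hv₄ : u / (1 + u + u ^ 2) = u * (1 + u + u ^ 2)⁻¹ := div_eq_mul_inv ..
    calc _ = u ^ p * |(1 + u + u ^ 2)⁻¹ ^ p - ((1 + u) / (1 + u + u ^ 2)) ^ p| := by
          simp only [hv₃, hv₄]
          rw [mul_rpow_sub_mul_rpow hu₀.le (by positivity) (by positivity), abs_mul,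
            abs_of_nonneg (rpow_nonneg hu₀.le p)]
      _ ≤ u ^ p * (C * u) := by
          gcongr
          exact (hlip _ hw _ hv₁).trans
            (by gcongr; exact abs_inv_sub_one_add_div_one_add_add_sq_le hu₀.le)
      _ = C * u ^ (2 * β + 5 / 2) := by
          rw [show 2 * β + 5 / 2 = p + 1 by ring, rpow_add_one hu₀.ne']; ring

theorem stmt_14 (β : ℝ) (hβ : β ∈ Set.Ioo (-1:ℝ) 1) :
    ∃ C : ℝ, 0 < C ∧ ∀ u ∈ Set.Ioc (0:ℝ) 1,
      let v1 := (1 + u) / (1 + u + u^2)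
      let v2 := (1:ℝ)
      let v3 := u * (1 + u) / (1 + u + u^2)
      let v4 := u / (1 + u + u^2)
      |v2 ^ (2*β + 3/2) - v1 ^ (2*β + 3/2)| ≤ C * u^2 ∧
      |v4 ^ (2*β + 3/2) - v3 ^ (2*β + 3/2)| ≤ C * u ^ (2*β + 5/2) :=
  stmt_14_general β
end

section
/- The collision operator C(n)(omega) of the kinetic MMT equation (alpha = 1/2) admits the representation C(n)(omega) = omega^(3+4beta) * integral over u in (0,1) of sum over j,k in {1,2,3,4} of (-1)^(j+k) * (1/(1+u+u^2)) * v_k^(-1) * (prod_{i=1}^4 (v_i/v_k))^(beta+1) * (prod_{i=1}^4 n(omega v_i/v_k)) / n(omega v_j/v_k) du, where v1 = (1+u)/(1+u+u^2), v2 = 1, v3 = u(1+u)/(1+u+u^2), v4 = u/(1+u+u^2), and this equals the sum S1 + S2 + S3 + S4 of the Zakharov-Guyenne-Pushkarev-Dias parameterization. -/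
open MeasureTheory

/-- The weights `v₁, v₂, v₃, v₄` of the symmetric representation of the MMT
collision operator. -/
noncomputable def mmtV (u : ℝ) : Fin 4 → ℝ :=
  ![(1 + u) / (1 + u + u^2), 1, u * (1 + u) / (1 + u + u^2), u / (1 + u + u^2)]

/-- The symmetric representation of the MMT collision operator. -/
noncomputable def mmtRep (β : ℝ) (n : ℝ → ℝ) (ω : ℝ) : ℝ :=
  ω ^ (3 + 4*β) * ∫ u in Set.Ioo (0:ℝ) 1,
    ∑ j : Fin 4, ∑ k : Fin 4,
      (-1 : ℝ) ^ ((j : ℕ) + (k : ℕ)) * (1 / (1 + u + u^2)) * (mmtV u k)⁻¹ *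
        (∏ i : Fin 4, mmtV u i / mmtV u k) ^ (β + 1) *
        ∏ i ∈ Finset.univ.erase j, n (ω * mmtV u i / mmtV u k)

/-- The combination of gain and loss terms `f₁f₂f₃ + f₁f₂f_ω - f₁f_ωf₃ - f_ωf₂f₃`. -/
noncomputable def mmtComb (n : ℝ → ℝ) (ω ω1 ω2 ω3 : ℝ) : ℝ :=
  n ω1 * n ω2 * n ω3 + n ω1 * n ω2 * n ω - n ω1 * n ω * n ω3 - n ω * n ω2 * n ω3

/-- The first term of the Zakharov-Guyenne-Pushkarev-Dias parameterization. -/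
noncomputable def mmtS1 (β : ℝ) (n : ℝ → ℝ) (ω : ℝ) : ℝ :=
  ω ^ (4*β + 3) * ∫ u in Set.Ioo (0:ℝ) 1,
    u ^ (2*β + 2) * (u + 1) ^ (2*β + 2) / (1 + u + u^2) ^ (3*β + 4) *
      mmtComb n ω ((1 + u) / (1 + u + u^2) * ω) (u * (1 + u) / (1 + u + u^2) * ω)
        (u / (1 + u + u^2) * ω)

/-- The second term of the Zakharov-Guyenne-Pushkarev-Dias parameterization. -/
noncomputable def mmtS2 (β : ℝ) (n : ℝ → ℝ) (ω : ℝ) : ℝ :=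
  ω ^ (4*β + 3) * ∫ u in Set.Ioo (0:ℝ) 1,
    (1 + u + u^2) ^ (β + 1) * (u + 1) ^ (2*β + 2) / u ^ (2*β + 3) *
      mmtComb n ω ((u + 1) * ω) ((u + 1) / u * ω) ((1 + u + u^2) / u * ω)

/-- The third term of the Zakharov-Guyenne-Pushkarev-Dias parameterization. -/
noncomputable def mmtS3 (β : ℝ) (n : ℝ → ℝ) (ω : ℝ) : ℝ :=
  ω ^ (4*β + 3) * ∫ u in Set.Ioo (0:ℝ) 1,
    (1 + u + u^2) ^ (β + 1) * u ^ (2*β + 2) / (u + 1) ^ (2*β + 3) *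
      mmtComb n ω ((1 + u + u^2) / (u + 1) * ω) (u / (u + 1) * ω) (u * ω)

/-- The fourth term of the Zakharov-Guyenne-Pushkarev-Dias parameterization. -/
noncomputable def mmtS4 (β : ℝ) (n : ℝ → ℝ) (ω : ℝ) : ℝ :=
  ω ^ (4*β + 3) * ∫ u in Set.Ioo (0:ℝ) 1,
    (1 + u + u^2) ^ (β + 1) / (u ^ (2*β + 3) * (u + 1) ^ (2*β + 3)) *
      mmtComb n ω ((1 + u + u^2) / ((u + 1) * u) * ω) (1 / (u + 1) * ω) (1 / u * ω)

section mmtAux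

/-- `k = 1` block equals the `S₃` integrand. -/
lemma mmtKey0 (β ω u : ℝ) (n : ℝ → ℝ) (hu : 0 < u) :
    ∑ j : Fin 4,
      (-1 : ℝ) ^ ((j : ℕ) + ((0 : Fin 4) : ℕ)) * (1 / (1 + u + u^2)) * (mmtV u 0)⁻¹ *
        (∏ i : Fin 4, mmtV u i / mmtV u 0) ^ (β + 1) *
        ∏ i ∈ Finset.univ.erase j, n (ω * mmtV u i / mmtV u 0)
    = (1 + u + u^2) ^ (β + 1) * u ^ (2*β + 2) / (u + 1) ^ (2*β + 3) *
      mmtComb n ω ((1 + u + u^2) / (u + 1) * ω) (u / (u + 1) * ω) (u * ω) := by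
  have hD : (0:ℝ) < 1 + u + u^2 := by positivity
  have hu1 : (0:ℝ) < u + 1 := by positivity
  have e0 : (Finset.univ.erase (0:Fin 4)) = {1,2,3} := by decide
  have e1 : (Finset.univ.erase (1:Fin 4)) = {0,2,3} := by decide
  have e2 : (Finset.univ.erase (2:Fin 4)) = {0,1,3} := by decide
  have e3 : (Finset.univ.erase (3:Fin 4)) = {0,1,2} := by decide
  simp only [Fin.sum_univ_four, Fin.prod_univ_four, e0, e1, e2, e3, mmtV, mmtComb,
    Matrix.cons_val_zero, Matrix.cons_val_one, Matrix.head_cons,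
    Matrix.cons_val_two, Matrix.tail_cons, Matrix.cons_val_three, mul_one, div_one, one_div,
    inv_one, Fin.val_zero, Fin.val_one, Fin.val_two]
  rw [Finset.prod_insert (by decide), Finset.prod_insert (by decide), Finset.prod_singleton,
    Finset.prod_insert (by decide), Finset.prod_insert (by decide), Finset.prod_singleton,
    Finset.prod_insert (by decide), Finset.prod_insert (by decide), Finset.prod_singleton,
    Finset.prod_insert (by decide), Finset.prod_insert (by decide), Finset.prod_singleton]
  simp only [mmtV, Matrix.cons_val_zero, Matrix.cons_val_one, Matrix.head_cons,
    Matrix.cons_val_two, Matrix.tail_cons, Matrix.cons_val_three, mul_one, div_one]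
  have dr : ∀ a b : ℝ, 0 ≤ a → 0 ≤ b → ∀ e : ℝ, (a/b)^e = a^e/b^e := fun a b ha hb e => Real.div_rpow ha hb e
  have mr : ∀ a b : ℝ, 0 ≤ a → 0 ≤ b → ∀ e : ℝ, (a*b)^e = a^e*b^e := fun a b ha hb e => Real.mul_rpow ha hb
  have hP2 : u ^ (2*β+2) = u^(β+1) * u^(β+1) := by
    rw [show 2*β+2 = (β+1)+(β+1) by ring, Real.rpow_add hu]
  have hq23 : (u+1) ^ (2*β+3) = (u+1)^(β+1) * (u+1)^(β+1) * (u+1) := by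
    rw [show 2*β+3 = (β+1)+(β+1)+1 by ring, Real.rpow_add hu1, Real.rpow_add hu1, Real.rpow_one]
  have hB : ((1 + u) / (1+u+u^2) / ((1 + u) / (1+u+u^2)) * ((1 + u) / (1+u+u^2))⁻¹ *
        (u * (1 + u) / (1+u+u^2) / ((1 + u) / (1+u+u^2))) *
        (u / (1+u+u^2) / ((1 + u) / (1+u+u^2)))) ^ (β+1)
      = (u^(β+1) * u^(β+1) * (1+u+u^2)^(β+1)) / ((u+1)^(β+1) * (u+1)^(β+1)) := by
    rw [show ((1 + u) / (1+u+u^2) / ((1 + u) / (1+u+u^2)) * ((1 + u) / (1+u+u^2))⁻¹ *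
        (u * (1 + u) / (1+u+u^2) / ((1 + u) / (1+u+u^2))) *
        (u / (1+u+u^2) / ((1 + u) / (1+u+u^2)))) = u*u*(1+u+u^2)/((u+1)*(u+1)) by
          field_simp; ring,
      dr _ _ (by positivity) (by positivity), mr _ _ (by positivity) (by positivity),
      mr _ _ (by positivity) (by positivity), mr _ _ (by positivity) (by positivity)]
  rw [hB, hP2, hq23, show ((3:Fin 4):ℕ) = 3 from rfl,
    show ω * ((1+u)/(1+u+u^2)) / ((1+u)/(1+u+u^2)) = ω by
      rw [mul_div_assoc, div_self (by positivity), mul_one],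
    show ω / ((1+u)/(1+u+u^2)) = (1+u+u^2)/(u+1)*ω by field_simp; ring,
    show ω * (u*(1+u)/(1+u+u^2)) / ((1+u)/(1+u+u^2)) = u*ω by field_simp,
    show ω * (u/(1+u+u^2)) / ((1+u)/(1+u+u^2)) = u/(u+1)*ω by field_simp; ring]
  have hC : (0:ℝ) < (1+u+u^2)^(β+1) := Real.rpow_pos_of_pos hD _
  have hQ : (0:ℝ) < (u+1)^(β+1) := Real.rpow_pos_of_pos hu1 _
  field_simp
  ring

/-- `k = 2` block equals the `S₁` integrand. -/
lemma mmtKey1 (β ω u : ℝ) (n : ℝ → ℝ) (hu : 0 < u) :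
    ∑ j : Fin 4,
      (-1 : ℝ) ^ ((j : ℕ) + ((1 : Fin 4) : ℕ)) * (1 / (1 + u + u^2)) * (mmtV u 1)⁻¹ *
        (∏ i : Fin 4, mmtV u i / mmtV u 1) ^ (β + 1) *
        ∏ i ∈ Finset.univ.erase j, n (ω * mmtV u i / mmtV u 1)
    = u ^ (2*β + 2) * (u + 1) ^ (2*β + 2) / (1 + u + u^2) ^ (3*β + 4) *
      mmtComb n ω ((1 + u) / (1 + u + u^2) * ω) (u * (1 + u) / (1 + u + u^2) * ω)
        (u / (1 + u + u^2) * ω) := by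
  have hD : (0:ℝ) < 1 + u + u^2 := by positivity
  have hu1 : (0:ℝ) < u + 1 := by positivity
  have e0 : (Finset.univ.erase (0:Fin 4)) = {1,2,3} := by decide
  have e1 : (Finset.univ.erase (1:Fin 4)) = {0,2,3} := by decide
  have e2 : (Finset.univ.erase (2:Fin 4)) = {0,1,3} := by decide
  have e3 : (Finset.univ.erase (3:Fin 4)) = {0,1,2} := by decide
  have dr : ∀ a b : ℝ, 0 ≤ a → 0 ≤ b → ∀ e : ℝ, (a/b)^e = a^e/b^e := fun a b ha hb e => Real.div_rpow ha hb e
  have mr : ∀ a b : ℝ, 0 ≤ a → 0 ≤ b → ∀ e : ℝ, (a*b)^e = a^e*b^e := fun a b ha hb e => Real.mul_rpow ha hb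
  have hP2 : u ^ (2*β+2) = u^(β+1) * u^(β+1) := by
    rw [show 2*β+2 = (β+1)+(β+1) by ring, Real.rpow_add hu]
  have hQ2 : (u+1) ^ (2*β+2) = (u+1)^(β+1) * (u+1)^(β+1) := by
    rw [show 2*β+2 = (β+1)+(β+1) by ring, Real.rpow_add hu1]
  have hD34 : (1+u+u^2) ^ (3*β+4) = (1+u+u^2)^(β+1) * (1+u+u^2)^(β+1) * (1+u+u^2)^(β+1) * (1+u+u^2) := by
    rw [show 3*β+4 = (β+1)+(β+1)+(β+1)+1 by ring, Real.rpow_add hD, Real.rpow_add hD,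
      Real.rpow_add hD, Real.rpow_one]
  simp only [Fin.sum_univ_four, Fin.prod_univ_four, e0, e1, e2, e3, mmtV, mmtComb,
    Matrix.cons_val_zero, Matrix.cons_val_one, Matrix.head_cons,
    Matrix.cons_val_two, Matrix.tail_cons, Matrix.cons_val_three, mul_one, div_one, one_div,
    inv_one, Fin.val_zero, Fin.val_one, Fin.val_two]
  rw [Finset.prod_insert (by decide), Finset.prod_insert (by decide), Finset.prod_singleton,
    Finset.prod_insert (by decide), Finset.prod_insert (by decide), Finset.prod_singleton,
    Finset.prod_insert (by decide), Finset.prod_insert (by decide), Finset.prod_singleton,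
    Finset.prod_insert (by decide), Finset.prod_insert (by decide), Finset.prod_singleton]
  simp only [mmtV, Matrix.cons_val_zero, Matrix.cons_val_one, Matrix.head_cons,
    Matrix.cons_val_two, Matrix.tail_cons, Matrix.cons_val_three, mul_one, div_one]
  have hB : ((1 + u) / (1+u+u^2) * (u * (1 + u) / (1+u+u^2)) * (u / (1+u+u^2))) ^ (β+1)
      = (u^(β+1) * u^(β+1) * ((u+1)^(β+1) * (u+1)^(β+1))) /
        ((1+u+u^2)^(β+1) * (1+u+u^2)^(β+1) * ((1+u+u^2)^(β+1))) := by
    rw [show (1 + u) / (1+u+u^2) * (u * (1 + u) / (1+u+u^2)) * (u / (1+u+u^2))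
        = u*u*((u+1)*(u+1))/((1+u+u^2)*(1+u+u^2)*((1+u+u^2))) by field_simp; ring,
      dr _ _ (by positivity) (by positivity), mr _ _ (by positivity) (by positivity),
      mr _ _ (by positivity) (by positivity), mr _ _ (by positivity) (by positivity),
      mr _ _ (by positivity) (by positivity), mr _ _ (by positivity) (by positivity)]
  rw [hB, hP2, hQ2, hD34, show ((3:Fin 4):ℕ) = 3 from rfl,
    show (1+u)/(1+u+u^2)*ω = ω*((1+u)/(1+u+u^2)) by ring,
    show u*(1+u)/(1+u+u^2)*ω = ω*(u*(1+u)/(1+u+u^2)) by ring,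
    show u/(1+u+u^2)*ω = ω*(u/(1+u+u^2)) by ring]
  generalize (1+u+u^2 : ℝ) = D
  ring

/-- `k = 3` block equals the `S₄` integrand. -/
lemma mmtKey2 (β ω u : ℝ) (n : ℝ → ℝ) (hu : 0 < u) :
    ∑ j : Fin 4,
      (-1 : ℝ) ^ ((j : ℕ) + ((2 : Fin 4) : ℕ)) * (1 / (1 + u + u^2)) * (mmtV u 2)⁻¹ *
        (∏ i : Fin 4, mmtV u i / mmtV u 2) ^ (β + 1) *
        ∏ i ∈ Finset.univ.erase j, n (ω * mmtV u i / mmtV u 2)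
    = (1 + u + u^2) ^ (β + 1) / (u ^ (2*β + 3) * (u + 1) ^ (2*β + 3)) *
      mmtComb n ω ((1 + u + u^2) / ((u + 1) * u) * ω) (1 / (u + 1) * ω) (1 / u * ω) := by
  have hD : (0:ℝ) < 1 + u + u^2 := by positivity
  have hu1 : (0:ℝ) < u + 1 := by positivity
  have e0 : (Finset.univ.erase (0:Fin 4)) = {1,2,3} := by decide
  have e1 : (Finset.univ.erase (1:Fin 4)) = {0,2,3} := by decide
  have e2 : (Finset.univ.erase (2:Fin 4)) = {0,1,3} := by decide
  have e3 : (Finset.univ.erase (3:Fin 4)) = {0,1,2} := by decide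
  simp only [Fin.sum_univ_four, Fin.prod_univ_four, e0, e1, e2, e3, mmtV, mmtComb,
    Matrix.cons_val_zero, Matrix.cons_val_one, Matrix.head_cons,
    Matrix.cons_val_two, Matrix.tail_cons, Matrix.cons_val_three, mul_one, div_one, one_div,
    inv_one, Fin.val_zero, Fin.val_one, Fin.val_two]
  rw [Finset.prod_insert (by decide), Finset.prod_insert (by decide), Finset.prod_singleton,
    Finset.prod_insert (by decide), Finset.prod_insert (by decide), Finset.prod_singleton,
    Finset.prod_insert (by decide), Finset.prod_insert (by decide), Finset.prod_singleton,
    Finset.prod_insert (by decide), Finset.prod_insert (by decide), Finset.prod_singleton]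
  simp only [mmtV, Matrix.cons_val_zero, Matrix.cons_val_one, Matrix.head_cons,
    Matrix.cons_val_two, Matrix.tail_cons, Matrix.cons_val_three, mul_one, div_one]
  have dr : ∀ a b : ℝ, 0 ≤ a → 0 ≤ b → ∀ e : ℝ, (a/b)^e = a^e/b^e := fun a b ha hb e => Real.div_rpow ha hb e
  have mr : ∀ a b : ℝ, 0 ≤ a → 0 ≤ b → ∀ e : ℝ, (a*b)^e = a^e*b^e := fun a b ha hb e => Real.mul_rpow ha hb
  have hu23 : u ^ (2*β+3) = u^(β+1) * u^(β+1) * u := by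
    rw [show 2*β+3 = (β+1)+(β+1)+1 by ring, Real.rpow_add hu, Real.rpow_add hu, Real.rpow_one]
  have hq23 : (u+1) ^ (2*β+3) = (u+1)^(β+1) * (u+1)^(β+1) * (u+1) := by
    rw [show 2*β+3 = (β+1)+(β+1)+1 by ring, Real.rpow_add hu1, Real.rpow_add hu1, Real.rpow_one]
  have hB : ((1 + u) / (1+u+u^2) / (u * (1 + u) / (1+u+u^2)) * (u * (1 + u) / (1+u+u^2))⁻¹ *
        (u * (1 + u) / (1+u+u^2) / (u * (1 + u) / (1+u+u^2))) *
        (u / (1+u+u^2) / (u * (1 + u) / (1+u+u^2)))) ^ (β+1)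
      = (1+u+u^2)^(β+1) / (u^(β+1) * u^(β+1) * ((u+1)^(β+1) * (u+1)^(β+1))) := by
    rw [show ((1 + u) / (1+u+u^2) / (u * (1 + u) / (1+u+u^2)) * (u * (1 + u) / (1+u+u^2))⁻¹ *
        (u * (1 + u) / (1+u+u^2) / (u * (1 + u) / (1+u+u^2))) *
        (u / (1+u+u^2) / (u * (1 + u) / (1+u+u^2)))) = (1+u+u^2)/(u*u*((u+1)*(u+1))) by
          field_simp; ring,
      dr _ _ (by positivity) (by positivity), mr _ _ (by positivity) (by positivity),
      mr _ _ (by positivity) (by positivity), mr _ _ (by positivity) (by positivity)]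
  rw [hB, hu23, hq23, show ((3:Fin 4):ℕ) = 3 from rfl,
    show ω * (u*(1+u)/(1+u+u^2)) / (u*(1+u)/(1+u+u^2)) = ω by
      rw [mul_div_assoc, div_self (by positivity), mul_one],
    show ω / (u*(1+u)/(1+u+u^2)) = (1+u+u^2)/((u+1)*u)*ω by field_simp; ring,
    show ω * ((1+u)/(1+u+u^2)) / (u*(1+u)/(1+u+u^2)) = u⁻¹*ω by field_simp,
    show ω * (u/(1+u+u^2)) / (u*(1+u)/(1+u+u^2)) = (u+1)⁻¹*ω by field_simp; ring]
  have hC : (0:ℝ) < (1+u+u^2)^(β+1) := Real.rpow_pos_of_pos hD _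
  have hQ : (0:ℝ) < (u+1)^(β+1) := Real.rpow_pos_of_pos hu1 _
  have hP : (0:ℝ) < u^(β+1) := Real.rpow_pos_of_pos hu _
  field_simp
  ring

/-- `k = 4` block equals the `S₂` integrand. -/
lemma mmtKey3 (β ω u : ℝ) (n : ℝ → ℝ) (hu : 0 < u) :
    ∑ j : Fin 4,
      (-1 : ℝ) ^ ((j : ℕ) + ((3 : Fin 4) : ℕ)) * (1 / (1 + u + u^2)) * (mmtV u 3)⁻¹ *
        (∏ i : Fin 4, mmtV u i / mmtV u 3) ^ (β + 1) *
        ∏ i ∈ Finset.univ.erase j, n (ω * mmtV u i / mmtV u 3)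
    = (1 + u + u^2) ^ (β + 1) * (u + 1) ^ (2*β + 2) / u ^ (2*β + 3) *
      mmtComb n ω ((u + 1) * ω) ((u + 1) / u * ω) ((1 + u + u^2) / u * ω) := by
  have hD : (0:ℝ) < 1 + u + u^2 := by positivity
  have hu1 : (0:ℝ) < u + 1 := by positivity
  have e0 : (Finset.univ.erase (0:Fin 4)) = {1,2,3} := by decide
  have e1 : (Finset.univ.erase (1:Fin 4)) = {0,2,3} := by decide
  have e2 : (Finset.univ.erase (2:Fin 4)) = {0,1,3} := by decide
  have e3 : (Finset.univ.erase (3:Fin 4)) = {0,1,2} := by decide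
  simp only [Fin.sum_univ_four, Fin.prod_univ_four, e0, e1, e2, e3, mmtV, mmtComb,
    Matrix.cons_val_zero, Matrix.cons_val_one, Matrix.head_cons,
    Matrix.cons_val_two, Matrix.tail_cons, Matrix.cons_val_three, mul_one, div_one, one_div,
    inv_one, Fin.val_zero, Fin.val_one, Fin.val_two]
  rw [Finset.prod_insert (by decide), Finset.prod_insert (by decide), Finset.prod_singleton,
    Finset.prod_insert (by decide), Finset.prod_insert (by decide), Finset.prod_singleton,
    Finset.prod_insert (by decide), Finset.prod_insert (by decide), Finset.prod_singleton,
    Finset.prod_insert (by decide), Finset.prod_insert (by decide), Finset.prod_singleton]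
  simp only [mmtV, Matrix.cons_val_zero, Matrix.cons_val_one, Matrix.head_cons,
    Matrix.cons_val_two, Matrix.tail_cons, Matrix.cons_val_three, mul_one, div_one]
  have dr : ∀ a b : ℝ, 0 ≤ a → 0 ≤ b → ∀ e : ℝ, (a/b)^e = a^e/b^e := fun a b ha hb e => Real.div_rpow ha hb e
  have mr : ∀ a b : ℝ, 0 ≤ a → 0 ≤ b → ∀ e : ℝ, (a*b)^e = a^e*b^e := fun a b ha hb e => Real.mul_rpow ha hb
  have hu23 : u ^ (2*β+3) = u^(β+1) * u^(β+1) * u := by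
    rw [show 2*β+3 = (β+1)+(β+1)+1 by ring, Real.rpow_add hu, Real.rpow_add hu, Real.rpow_one]
  have hQ2 : (u+1) ^ (2*β+2) = (u+1)^(β+1) * (u+1)^(β+1) := by
    rw [show 2*β+2 = (β+1)+(β+1) by ring, Real.rpow_add hu1]
  have hB : ((1 + u) / (1+u+u^2) / (u / (1+u+u^2)) * (u / (1+u+u^2))⁻¹ *
        (u * (1 + u) / (1+u+u^2) / (u / (1+u+u^2))) *
        (u / (1+u+u^2) / (u / (1+u+u^2)))) ^ (β+1)
      = ((u+1)^(β+1) * (u+1)^(β+1) * (1+u+u^2)^(β+1)) / (u^(β+1) * u^(β+1)) := by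
    rw [show ((1 + u) / (1+u+u^2) / (u / (1+u+u^2)) * (u / (1+u+u^2))⁻¹ *
        (u * (1 + u) / (1+u+u^2) / (u / (1+u+u^2))) *
        (u / (1+u+u^2) / (u / (1+u+u^2)))) = (u+1)*(u+1)*(1+u+u^2)/(u*u) by
          field_simp; ring,
      dr _ _ (by positivity) (by positivity), mr _ _ (by positivity) (by positivity),
      mr _ _ (by positivity) (by positivity), mr _ _ (by positivity) (by positivity)]
  rw [hB, hu23, hQ2, show ((3:Fin 4):ℕ) = 3 from rfl,
    show ω * (u/(1+u+u^2)) / (u/(1+u+u^2)) = ω by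
      rw [mul_div_assoc, div_self (by positivity), mul_one],
    show ω / (u/(1+u+u^2)) = (1+u+u^2)/u*ω by field_simp,
    show ω * ((1+u)/(1+u+u^2)) / (u/(1+u+u^2)) = (u+1)/u*ω by field_simp; ring,
    show ω * (u*(1+u)/(1+u+u^2)) / (u/(1+u+u^2)) = (u+1)*ω by field_simp; ring]
  have hC : (0:ℝ) < (1+u+u^2)^(β+1) := Real.rpow_pos_of_pos hD _
  have hQ : (0:ℝ) < (u+1)^(β+1) := Real.rpow_pos_of_pos hu1 _
  have hP : (0:ℝ) < u^(β+1) := Real.rpow_pos_of_pos hu _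
  field_simp
  ring

lemma contOn_comb {n : ℝ → ℝ} (hn : Continuous n) {f g h : ℝ → ℝ} {s : Set ℝ} (ω : ℝ)
    (hf : ContinuousOn f s) (hg : ContinuousOn g s) (hh : ContinuousOn h s) :
    ContinuousOn (fun u => mmtComb n ω (f u) (g u) (h u)) s := by
  have c1 := hn.comp_continuousOn hf
  have c2 := hn.comp_continuousOn hg
  have c3 := hn.comp_continuousOn hh
  have cw : ContinuousOn (fun _ : ℝ => n ω) s := continuousOn_const
  exact ((((c1.mul c2).mul c3).add ((c1.mul c2).mul cw)).sub ((c1.mul cw).mul c3)).sub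
    ((cw.mul c2).mul c3)

lemma mmtSplit {f : ℝ → ℝ} {δ : ℝ} (hδ : 0 < δ) (hδ1 : δ ≤ 1)
    (hz : ∀ x ∈ Set.Ioc (0:ℝ) δ, f x = 0) (hc : ContinuousOn f (Set.Icc δ 1)) :
    IntegrableOn f (Set.Ioo (0:ℝ) 1) := by
  have hsub : Set.Ioo (0:ℝ) 1 ⊆ Set.Ioc 0 δ ∪ Set.Icc δ 1 := by
    intro x hx
    by_cases hxδ : x ≤ δ
    · exact Or.inl ⟨hx.1, hxδ⟩
    · exact Or.inr ⟨le_of_not_ge hxδ, hx.2.le⟩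
  refine (IntegrableOn.union ?_ ?_).mono_set hsub
  · rw [integrableOn_congr_fun hz measurableSet_Ioc]
    exact integrableOn_zero
  · exact hc.integrableOn_Icc

lemma mmtInt1 (β ω a : ℝ) (hω : 0 < ω) (ha : 0 < a) {n : ℝ → ℝ} (hn : Continuous n)
    (h0 : ∀ x : ℝ, x ≤ a → n x = 0) :
    IntegrableOn (fun u : ℝ =>
      u ^ (2*β + 2) * (u + 1) ^ (2*β + 2) / (1 + u + u^2) ^ (3*β + 4) *
      mmtComb n ω ((1 + u) / (1 + u + u^2) * ω) (u * (1 + u) / (1 + u + u^2) * ω)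
        (u / (1 + u + u^2) * ω)) (Set.Ioo 0 1) := by
  have hδ : 0 < min (a/(2*ω)) 1 := lt_min (by positivity) one_pos
  refine mmtSplit hδ (min_le_right _ _) ?_ ?_
  · intro x hx
    have hx0 : 0 < x := hx.1
    have hxa : x ≤ a/(2*ω) := le_trans hx.2 (min_le_left _ _)
    have hx1 : x ≤ 1 := le_trans hx.2 (min_le_right _ _)
    have hD : (0:ℝ) < 1+x+x^2 := by positivity
    have harg : x*(1+x)/(1+x+x^2)*ω ≤ a := by
      rw [div_mul_eq_mul_div, div_le_iff₀ hD]
      have h2 : x*(2*ω) ≤ a := by rwa [← le_div_iff₀ (by positivity)]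
      nlinarith
    have harg3 : x/(1+x+x^2)*ω ≤ a := by
      rw [div_mul_eq_mul_div, div_le_iff₀ hD]
      have h2 : x*(2*ω) ≤ a := by rwa [← le_div_iff₀ (by positivity)]
      nlinarith
    simp [mmtComb, h0 _ harg, h0 _ harg3]
  · set s := Set.Icc (min (a/(2*ω)) 1) 1
    have hxp : ∀ x ∈ s, (0:ℝ) < x := fun x hx => lt_of_lt_of_le hδ hx.1
    have hD : ∀ x ∈ s, (0:ℝ) < 1 + x + x^2 := fun x hx => by nlinarith [hxp x hx]
    have hx1 : ∀ x ∈ s, (0:ℝ) < x + 1 := fun x hx => by nlinarith [hxp x hx]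
    refine ContinuousOn.mul ?_ (contOn_comb hn ω ?_ ?_ ?_)
    · refine ContinuousOn.div (ContinuousOn.mul ?_ ?_) ?_ ?_
      · exact ContinuousOn.rpow_const continuousOn_id (fun x hx => Or.inl (hxp x hx).ne')
      · exact ContinuousOn.rpow_const (by fun_prop) (fun x hx => Or.inl (hx1 x hx).ne')
      · exact ContinuousOn.rpow_const (by fun_prop) (fun x hx => Or.inl (hD x hx).ne')
      · exact fun x hx => (Real.rpow_pos_of_pos (hD x hx) _).ne'
    · exact ContinuousOn.mul (ContinuousOn.div (by fun_prop) (by fun_prop)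
        (fun x hx => (hD x hx).ne')) continuousOn_const
    · exact ContinuousOn.mul (ContinuousOn.div (by fun_prop) (by fun_prop)
        (fun x hx => (hD x hx).ne')) continuousOn_const
    · exact ContinuousOn.mul (ContinuousOn.div (by fun_prop) (by fun_prop)
        (fun x hx => (hD x hx).ne')) continuousOn_const

lemma mmtInt2 (β ω b : ℝ) (hω : 0 < ω) (hb : 0 < b) {n : ℝ → ℝ} (hn : Continuous n)
    (hB : ∀ x : ℝ, b ≤ x → n x = 0) :
    IntegrableOn (fun u : ℝ =>
      (1 + u + u^2) ^ (β + 1) * (u + 1) ^ (2*β + 2) / u ^ (2*β + 3) *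
      mmtComb n ω ((u + 1) * ω) ((u + 1) / u * ω) ((1 + u + u^2) / u * ω)) (Set.Ioo 0 1) := by
  have hδ : 0 < min (ω/b) 1 := lt_min (by positivity) one_pos
  refine mmtSplit hδ (min_le_right _ _) ?_ ?_
  · intro x hx
    have hx0 : 0 < x := hx.1
    have hxa : x ≤ ω/b := le_trans hx.2 (min_le_left _ _)
    have h2 : b*x ≤ ω := by
      rw [mul_comm, ← le_div_iff₀ hb]; exact hxa
    have harg2 : b ≤ (x+1)/x*ω := by
      rw [div_mul_eq_mul_div, le_div_iff₀ hx0]; nlinarith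
    have harg3 : b ≤ (1+x+x^2)/x*ω := by
      rw [div_mul_eq_mul_div, le_div_iff₀ hx0]; nlinarith
    simp [mmtComb, hB _ harg2, hB _ harg3]
  · set s := Set.Icc (min (ω/b) 1) 1
    have hxp : ∀ x ∈ s, (0:ℝ) < x := fun x hx => lt_of_lt_of_le hδ hx.1
    have hD : ∀ x ∈ s, (0:ℝ) < 1 + x + x^2 := fun x hx => by nlinarith [hxp x hx]
    have hx1 : ∀ x ∈ s, (0:ℝ) < x + 1 := fun x hx => by nlinarith [hxp x hx]
    refine ContinuousOn.mul ?_ (contOn_comb hn ω ?_ ?_ ?_)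
    · refine ContinuousOn.div (ContinuousOn.mul ?_ ?_) ?_ ?_
      · exact ContinuousOn.rpow_const (by fun_prop) (fun x hx => Or.inl (hD x hx).ne')
      · exact ContinuousOn.rpow_const (by fun_prop) (fun x hx => Or.inl (hx1 x hx).ne')
      · exact ContinuousOn.rpow_const continuousOn_id (fun x hx => Or.inl (hxp x hx).ne')
      · exact fun x hx => (Real.rpow_pos_of_pos (hxp x hx) _).ne'
    · fun_prop
    · exact ContinuousOn.mul (ContinuousOn.div (by fun_prop) (by fun_prop)
        (fun x hx => (hxp x hx).ne')) continuousOn_const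
    · exact ContinuousOn.mul (ContinuousOn.div (by fun_prop) (by fun_prop)
        (fun x hx => (hxp x hx).ne')) continuousOn_const

lemma mmtInt3 (β ω a : ℝ) (hω : 0 < ω) (ha : 0 < a) {n : ℝ → ℝ} (hn : Continuous n)
    (h0 : ∀ x : ℝ, x ≤ a → n x = 0) :
    IntegrableOn (fun u : ℝ =>
      (1 + u + u^2) ^ (β + 1) * u ^ (2*β + 2) / (u + 1) ^ (2*β + 3) *
      mmtComb n ω ((1 + u + u^2) / (u + 1) * ω) (u / (u + 1) * ω) (u * ω)) (Set.Ioo 0 1) := by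
  have hδ : 0 < min (a/ω) 1 := lt_min (by positivity) one_pos
  refine mmtSplit hδ (min_le_right _ _) ?_ ?_
  · intro x hx
    have hx0 : 0 < x := hx.1
    have hxa : x ≤ a/ω := le_trans hx.2 (min_le_left _ _)
    have h2 : x*ω ≤ a := by rwa [← le_div_iff₀ hω]
    have harg2 : x/(x+1)*ω ≤ a := by
      rw [div_mul_eq_mul_div, div_le_iff₀ (by positivity)]; nlinarith
    simp [mmtComb, h0 _ harg2, h0 _ h2]
  · set s := Set.Icc (min (a/ω) 1) 1
    have hxp : ∀ x ∈ s, (0:ℝ) < x := fun x hx => lt_of_lt_of_le hδ hx.1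
    have hD : ∀ x ∈ s, (0:ℝ) < 1 + x + x^2 := fun x hx => by nlinarith [hxp x hx]
    have hx1 : ∀ x ∈ s, (0:ℝ) < x + 1 := fun x hx => by nlinarith [hxp x hx]
    refine ContinuousOn.mul ?_ (contOn_comb hn ω ?_ ?_ ?_)
    · refine ContinuousOn.div (ContinuousOn.mul ?_ ?_) ?_ ?_
      · exact ContinuousOn.rpow_const (by fun_prop) (fun x hx => Or.inl (hD x hx).ne')
      · exact ContinuousOn.rpow_const continuousOn_id (fun x hx => Or.inl (hxp x hx).ne')
      · exact ContinuousOn.rpow_const (by fun_prop) (fun x hx => Or.inl (hx1 x hx).ne')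
      · exact fun x hx => (Real.rpow_pos_of_pos (hx1 x hx) _).ne'
    · exact ContinuousOn.mul (ContinuousOn.div (by fun_prop) (by fun_prop)
        (fun x hx => (hx1 x hx).ne')) continuousOn_const
    · exact ContinuousOn.mul (ContinuousOn.div (by fun_prop) (by fun_prop)
        (fun x hx => (hx1 x hx).ne')) continuousOn_const
    · fun_prop

lemma mmtInt4 (β ω b : ℝ) (hω : 0 < ω) (hb : 0 < b) {n : ℝ → ℝ} (hn : Continuous n)
    (hB : ∀ x : ℝ, b ≤ x → n x = 0) :
    IntegrableOn (fun u : ℝ =>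
      (1 + u + u^2) ^ (β + 1) / (u ^ (2*β + 3) * (u + 1) ^ (2*β + 3)) *
      mmtComb n ω ((1 + u + u^2) / ((u + 1) * u) * ω) (1 / (u + 1) * ω) (1 / u * ω))
      (Set.Ioo 0 1) := by
  have hδ : 0 < min (ω/(2*b)) 1 := lt_min (by positivity) one_pos
  refine mmtSplit hδ (min_le_right _ _) ?_ ?_
  · intro x hx
    have hx0 : 0 < x := hx.1
    have hxa : x ≤ ω/(2*b) := le_trans hx.2 (min_le_left _ _)
    have hx1 : x ≤ 1 := le_trans hx.2 (min_le_right _ _)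
    have h2 : 2*b*x ≤ ω := by
      rw [mul_comm, ← le_div_iff₀ (by positivity)]; exact hxa
    have harg1 : b ≤ (1+x+x^2)/((x+1)*x)*ω := by
      rw [div_mul_eq_mul_div, le_div_iff₀ (by positivity)]; nlinarith
    have harg3 : b ≤ x⁻¹*ω := by
      rw [← one_div, div_mul_eq_mul_div, le_div_iff₀ hx0]; nlinarith
    simp [mmtComb, hB _ harg1, hB _ harg3]
  · set s := Set.Icc (min (ω/(2*b)) 1) 1
    have hxp : ∀ x ∈ s, (0:ℝ) < x := fun x hx => lt_of_lt_of_le hδ hx.1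
    have hD : ∀ x ∈ s, (0:ℝ) < 1 + x + x^2 := fun x hx => by nlinarith [hxp x hx]
    have hx1 : ∀ x ∈ s, (0:ℝ) < x + 1 := fun x hx => by nlinarith [hxp x hx]
    refine ContinuousOn.mul ?_ (contOn_comb hn ω ?_ ?_ ?_)
    · refine ContinuousOn.div ?_ (ContinuousOn.mul ?_ ?_) ?_
      · exact ContinuousOn.rpow_const (by fun_prop) (fun x hx => Or.inl (hD x hx).ne')
      · exact ContinuousOn.rpow_const continuousOn_id (fun x hx => Or.inl (hxp x hx).ne')
      · exact ContinuousOn.rpow_const (by fun_prop) (fun x hx => Or.inl (hx1 x hx).ne')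
      · exact fun x hx => (mul_pos (Real.rpow_pos_of_pos (hxp x hx) _)
          (Real.rpow_pos_of_pos (hx1 x hx) _)).ne'
    · exact ContinuousOn.mul (ContinuousOn.div (by fun_prop) (by fun_prop)
        (fun x hx => (mul_pos (hx1 x hx) (hxp x hx)).ne')) continuousOn_const
    · exact ContinuousOn.mul (ContinuousOn.div (by fun_prop) (by fun_prop)
        (fun x hx => (hx1 x hx).ne')) continuousOn_const
    · exact ContinuousOn.mul (ContinuousOn.div (by fun_prop) (by fun_prop)
        (fun x hx => (hxp x hx).ne')) continuousOn_const

end mmtAux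

theorem stmt_17 (β : ℝ) (n : ℝ → ℝ)
    (hn : ContDiff ℝ (⊤ : ℕ∞) n) (hsupp : HasCompactSupport n)
    (hpos : tsupport n ⊆ Set.Ioi (0:ℝ)) (ω : ℝ) (hω : 0 < ω) :
    mmtRep β n ω = mmtS1 β n ω + mmtS2 β n ω + mmtS3 β n ω + mmtS4 β n ω := by
  obtain ⟨a, ha, h0⟩ : ∃ a : ℝ, 0 < a ∧ ∀ x : ℝ, x ≤ a → n x = 0 := by
    rcases Set.eq_empty_or_nonempty (tsupport n) with h | h
    · exact ⟨1, one_pos, fun x _ => image_eq_zero_of_notMem_tsupport (by simp [h])⟩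
    · have hcpt : IsCompact (tsupport n) := hsupp
      have hmem := hcpt.sInf_mem h
      have hapos : (0:ℝ) < sInf (tsupport n) := hpos hmem
      refine ⟨sInf (tsupport n) / 2, by positivity,
        fun x hx => image_eq_zero_of_notMem_tsupport fun hxK => ?_⟩
      have := csInf_le hcpt.bddBelow hxK
      linarith
  obtain ⟨b, hb, hB⟩ : ∃ b : ℝ, 0 < b ∧ ∀ x : ℝ, b ≤ x → n x = 0 := by
    obtain ⟨r, hr⟩ := hsupp.isBounded.subset_closedBall 0
    refine ⟨max r 0 + 1, by positivity,
      fun x hx => image_eq_zero_of_notMem_tsupport fun hxK => ?_⟩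
    have h1 := hr hxK
    rw [Metric.mem_closedBall, Real.dist_eq, sub_zero] at h1
    have h2 : x ≤ r := le_trans (le_abs_self x) h1
    have h3 := le_max_left r 0
    linarith
  have hcont := hn.continuous
  have h1 := mmtInt1 β ω a hω ha hcont h0
  have h2 := mmtInt2 β ω b hω hb hcont hB
  have h3 := mmtInt3 β ω a hω ha hcont h0
  have h4 := mmtInt4 β ω b hω hb hcont hB
  rw [mmtRep, mmtS1, mmtS2, mmtS3, mmtS4, show (3 + 4*β) = 4*β + 3 by ring]
  have key : (∫ u in Set.Ioo (0:ℝ) 1,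
      ∑ j : Fin 4, ∑ k : Fin 4,
        (-1 : ℝ) ^ ((j : ℕ) + (k : ℕ)) * (1 / (1 + u + u^2)) * (mmtV u k)⁻¹ *
          (∏ i : Fin 4, mmtV u i / mmtV u k) ^ (β + 1) *
          ∏ i ∈ Finset.univ.erase j, n (ω * mmtV u i / mmtV u k))
      = ∫ u in Set.Ioo (0:ℝ) 1,
        (u ^ (2*β + 2) * (u + 1) ^ (2*β + 2) / (1 + u + u^2) ^ (3*β + 4) *
          mmtComb n ω ((1 + u) / (1 + u + u^2) * ω) (u * (1 + u) / (1 + u + u^2) * ω)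
            (u / (1 + u + u^2) * ω) +
         (1 + u + u^2) ^ (β + 1) * (u + 1) ^ (2*β + 2) / u ^ (2*β + 3) *
          mmtComb n ω ((u + 1) * ω) ((u + 1) / u * ω) ((1 + u + u^2) / u * ω) +
         (1 + u + u^2) ^ (β + 1) * u ^ (2*β + 2) / (u + 1) ^ (2*β + 3) *
          mmtComb n ω ((1 + u + u^2) / (u + 1) * ω) (u / (u + 1) * ω) (u * ω) +
         (1 + u + u^2) ^ (β + 1) / (u ^ (2*β + 3) * (u + 1) ^ (2*β + 3)) *
          mmtComb n ω ((1 + u + u^2) / ((u + 1) * u) * ω) (1 / (u + 1) * ω) (1 / u * ω)) := by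
    refine setIntegral_congr_fun measurableSet_Ioo (fun u hu => ?_)
    rw [Finset.sum_comm, Fin.sum_univ_four, mmtKey0 β ω u n hu.1, mmtKey1 β ω u n hu.1,
      mmtKey2 β ω u n hu.1, mmtKey3 β ω u n hu.1]
    ring
  have h12 : IntegrableOn (fun u : ℝ =>
      u ^ (2*β + 2) * (u + 1) ^ (2*β + 2) / (1 + u + u^2) ^ (3*β + 4) *
          mmtComb n ω ((1 + u) / (1 + u + u^2) * ω) (u * (1 + u) / (1 + u + u^2) * ω)
            (u / (1 + u + u^2) * ω) +
        (1 + u + u^2) ^ (β + 1) * (u + 1) ^ (2*β + 2) / u ^ (2*β + 3) *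
          mmtComb n ω ((u + 1) * ω) ((u + 1) / u * ω) ((1 + u + u^2) / u * ω)) (Set.Ioo 0 1) := h1.add h2
  have h123 : IntegrableOn (fun u : ℝ =>
      u ^ (2*β + 2) * (u + 1) ^ (2*β + 2) / (1 + u + u^2) ^ (3*β + 4) *
          mmtComb n ω ((1 + u) / (1 + u + u^2) * ω) (u * (1 + u) / (1 + u + u^2) * ω)
            (u / (1 + u + u^2) * ω) +
        (1 + u + u^2) ^ (β + 1) * (u + 1) ^ (2*β + 2) / u ^ (2*β + 3) *
          mmtComb n ω ((u + 1) * ω) ((u + 1) / u * ω) ((1 + u + u^2) / u * ω) +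
        (1 + u + u^2) ^ (β + 1) * u ^ (2*β + 2) / (u + 1) ^ (2*β + 3) *
          mmtComb n ω ((1 + u + u^2) / (u + 1) * ω) (u / (u + 1) * ω) (u * ω)) (Set.Ioo 0 1) := h12.add h3
  rw [key, integral_add h123 h4, integral_add h12 h3, integral_add h1 h2]
  ring
end
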